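/- arXiv:math/0504388 — 7 statements merged into one kernel-verified Lean document; each statement's English description precedes it below -/
import Mathlib

section
/- For every prime p and every integer k with p+2 ≤ k ≤ 2p−1, write (λ₋ · λ₊⁻¹)^{k−1} = Σ_{i≥0} c_i X^i in ℚ_p[[X]]. Then p·c_i lies in ℤ_p for every i with 0 ≤ i ≤ k−2. (Equivalently, in the paper's formulation: if a_p has p-adic valuation 1 and one writes a_p(λ₋/λ₊)^{k−1} = Σ α_i X^i, then v_p(α_i) ≥ 0 for i ∈ {0,…,k−2}.) -/
open PowerSeries

/-- `qSeries p n` is the polynomial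
`q_n = ((1+X)^(p^n) - 1)/((1+X)^(p^(n-1)) - 1) = Φ_p((1+X)^(p^(n-1)))`,
viewed as a power series over `ℚ_p`. -/
noncomputable def qSeries (p : ℕ) [Fact p.Prime] (n : ℕ) : PowerSeries ℚ_[p] :=
  ∑ j ∈ Finset.range p, ((1 + PowerSeries.X) ^ (p ^ (n - 1))) ^ j

/-- The product topology of coefficientwise convergence on `ℚ_p[[X]]`. -/
noncomputable def coeffTopology (p : ℕ) [Fact p.Prime] :
    TopologicalSpace (PowerSeries ℚ_[p]) :=
  TopologicalSpace.induced (fun f n => (PowerSeries.coeff (R := ℚ_[p]) n) f) Pi.topologicalSpace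

/-- `λ₊ = ∏_{n ≥ 1} q_{2n}/p` in `ℚ_p[[X]]`. -/
noncomputable def lambdaPlus (p : ℕ) [Fact p.Prime] : PowerSeries ℚ_[p] :=
  letI := coeffTopology p
  ∏' n : ℕ, ((p : ℚ_[p])⁻¹ • qSeries p (2 * (n + 1)))

/-- `λ₋ = ∏_{n ≥ 1} q_{2n-1}/p` in `ℚ_p[[X]]`. -/
noncomputable def lambdaMinus (p : ℕ) [Fact p.Prime] : PowerSeries ℚ_[p] :=
  letI := coeffTopology p
  ∏' n : ℕ, ((p : ℚ_[p])⁻¹ • qSeries p (2 * n + 1))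

/-!
For odd `p` and `n ≥ 2`, the factor `q_n / p` has constant term `1` and `p`-integral
coefficients in all degrees `j < 2p`: `p^(n-1)` divides `j * C(p^(n-1) r, j)`, which settles
`p ∤ j`, and for `j = p`, `n = 2` Lucas' theorem gives `∑_{r<p} C(pr, p) ≡ ∑_{r<p} r ≡ 0`.
These factors tend to `1` coefficientwise at a geometric rate, so the products defining `λ₊`
and `λ₋ / (q_1 / p)` converge and keep this integrality, and so does `λ₊⁻¹`.
Since `q_1 = X^(p-1) + p · (integral)`, we get `λ₋ λ₊⁻¹ = a + p⁻¹ X^(p-1) w` with `a`, `w`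
integral up to degree `2p - 3`, and in `p (a + p⁻¹ X^(p-1) w)^m` every term carrying a
denominator is a multiple of `X^(2p-2)`.
-/

theorem exists_add_pow_succ_eq {R : Type*} [CommSemiring R] (a b : R) (m : ℕ) :
    ∃ c, (a + b) ^ (m + 1) = a ^ (m + 1) + (m + 1) * a ^ m * b + b ^ 2 * c := by
  induction m with
  | zero => exact ⟨0, by ring⟩
  | succ m ih =>
    obtain ⟨c, hc⟩ := ih
    exact ⟨a * c + (m + 1) * a ^ m + b * c, by rw [pow_succ, hc]; push_cast; ring⟩

theorem Nat.dvd_mul_sum_choose_mul (m j : ℕ) (s : Finset ℕ) :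
    m ∣ j * ∑ r ∈ s, (m * r).choose j := by
  rw [Finset.mul_sum]
  refine Finset.dvd_sum fun r _ => ?_
  rcases j with _ | j
  · simp
  rcases eq_or_ne (m * r) 0 with h | h
  · simp [h]
  obtain ⟨t, ht⟩ := Nat.exists_eq_add_one_of_ne_zero h
  exact ⟨r * t.choose j, by rw [mul_comm, ht, ← Nat.add_one_mul_choose_eq, ← ht]; ring⟩

namespace PowerSeries

theorem coeff_one_add_X_pow {R : Type*} [CommSemiring R] (m j : ℕ) :
    coeff j ((1 + X : R⟦X⟧) ^ m) = m.choose j := by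
  have : (1 + X : R⟦X⟧) ^ m = ((1 + Polynomial.X) ^ m : Polynomial R) := by simp
  rw [this, Polynomial.coeff_coe, Polynomial.coeff_one_add_X_pow]

section Ultrametric

variable {K : Type*} [NormedCommRing K]

theorem norm_coeff_one_le [NormOneClass K] (j : ℕ) : ‖coeff j (1 : K⟦X⟧)‖ ≤ 1 := by
  rw [coeff_one]
  split_ifs <;> simp

theorem norm_coeff_mul_le_of_le [IsUltrametricDist K] {f g : K⟦X⟧} {n : ℕ} {C D : ℝ}
    (hf : ∀ j ≤ n, ‖coeff j f‖ ≤ C) (hg : ∀ j ≤ n, ‖coeff j g‖ ≤ D) :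
    ∀ j ≤ n, ‖coeff j (f * g)‖ ≤ C * D := by
  have hC : 0 ≤ C := (norm_nonneg _).trans (hf 0 n.zero_le)
  have hD : 0 ≤ D := (norm_nonneg _).trans (hg 0 n.zero_le)
  intro j hj
  rw [coeff_mul]
  refine IsUltrametricDist.norm_sum_le_of_forall_le_of_nonneg (by positivity) fun x hx => ?_
  rw [Finset.HasAntidiagonal.mem_antidiagonal] at hx
  exact (norm_mul_le _ _).trans (mul_le_mul (hf _ (by omega)) (hg _ (by omega)) (norm_nonneg _) hC)

variable [NormOneClass K] [IsUltrametricDist K]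

theorem norm_coeff_prod_le_of_le {ι : Type*} (s : Finset ι) {f : ι → K⟦X⟧} {n : ℕ} {C : ι → ℝ}
    (h : ∀ i ∈ s, ∀ j ≤ n, ‖coeff j (f i)‖ ≤ C i) :
    ∀ j ≤ n, ‖coeff j (∏ i ∈ s, f i)‖ ≤ ∏ i ∈ s, C i := by
  induction s using Finset.cons_induction with
  | empty => simpa using fun j _ => norm_coeff_one_le j
  | cons a s ha ih =>
    simp only [Finset.prod_cons]
    exact norm_coeff_mul_le_of_le (h a (s.mem_cons_self a))
      (ih fun i hi => h i (Finset.mem_cons_of_mem hi))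

variable (K) in
def integralUpTo (N : ℕ) : Subring K⟦X⟧ where
  carrier := {f | ∀ j ≤ N, ‖coeff j f‖ ≤ 1}
  mul_mem' hf hg := by simpa using norm_coeff_mul_le_of_le hf hg
  one_mem' j _ := norm_coeff_one_le j
  add_mem' hf hg j hj := by
    rw [map_add]
    exact (IsUltrametricDist.norm_add_le_max _ _).trans (max_le (hf j hj) (hg j hj))
  zero_mem' := by simp
  neg_mem' hf := by simpa using hf

variable {N : ℕ}

theorem C_mem_integralUpTo {a : K} (ha : ‖a‖ ≤ 1) : C a ∈ integralUpTo K N := by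
  intro j _
  rw [coeff_C]
  split_ifs <;> simp [ha]

theorem X_mem_integralUpTo : (X : K⟦X⟧) ∈ integralUpTo K N := by
  intro j _
  rw [coeff_X]
  split_ifs <;> simp

open WithPiTopology in
theorem isClosed_integralUpTo : IsClosed (integralUpTo K N : Set K⟦X⟧) := by
  show IsClosed {f : K⟦X⟧ | ∀ j ≤ N, ‖coeff j f‖ ≤ 1}
  simp only [Set.ofPred_forall]
  exact isClosed_iInter fun j => isClosed_iInter fun _ =>
    isClosed_le (continuous_norm.comp (continuous_coeff K j)) continuous_const

open WithPiTopology in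
theorem multipliable_one_add_of_summable_norm_coeff [CompleteSpace K] {ι : Type*}
    {f : ι → K⟦X⟧} (hf : ∀ j, Summable fun i => ‖coeff j (f i)‖) :
    Multipliable fun i => 1 + f i := by
  refine multipliable_one_add_of_summable_prod ((summable_iff_summable_coeff _).2 fun n => ?_)
  refine (summable_finsetProd_of_summable_nonneg (fun i => by positivity)
    (summable_sum fun j _ => hf j)).of_norm_bounded fun s => norm_coeff_prod_le_of_le s
      (fun i _ j hj => Finset.single_le_sum (f := fun j => ‖coeff j (f i)‖)
        (fun _ _ => norm_nonneg _) (Finset.mem_range.2 (Nat.lt_succ_of_le hj))) n le_rfl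

end Ultrametric

section Field

variable {K : Type*} [NormedField K] [IsUltrametricDist K] {N : ℕ}

theorem inv_mem_integralUpTo {f : K⟦X⟧} (h0 : constantCoeff f = 1)
    (hf : f ∈ integralUpTo K N) : f⁻¹ ∈ integralUpTo K N := by
  intro j
  induction j using Nat.strong_induction_on with
  | _ j ih =>
    intro hj
    rw [coeff_inv, h0, inv_one]
    split_ifs with hj0
    · simp
    rw [neg_one_mul, norm_neg]
    refine IsUltrametricDist.norm_sum_le_of_forall_le_of_nonneg zero_le_one fun x hx => ?_
    rw [Finset.HasAntidiagonal.mem_antidiagonal] at hx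
    split_ifs with hx2
    · exact (norm_mul_le _ _).trans
        (mul_le_one₀ (hf _ (by omega)) (norm_nonneg _) (ih _ hx2 (by omega)))
    · simp

theorem smul_pow_add_inv_smul_X_pow_mul_mem {d : ℕ} (hN : N < 2 * d) {a w : K⟦X⟧}
    (ha : a ∈ integralUpTo K N) (hw : w ∈ integralUpTo K N) {π : K} (hπ : π ≠ 0)
    (hπ1 : ‖π‖ ≤ 1) (m : ℕ) :
    π • (a + π⁻¹ • (X ^ d * w)) ^ (m + 1) ∈ integralUpTo K N := by
  obtain ⟨c, hc⟩ := exists_add_pow_succ_eq a (π⁻¹ • (X ^ d * w)) m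
  have hππ : C π * C π⁻¹ = 1 := by rw [← map_mul, mul_inv_cancel₀ hπ, map_one]
  have hexp : π • (a + π⁻¹ • (X ^ d * w)) ^ (m + 1) = C π * a ^ (m + 1) +
      ((m : K⟦X⟧) + 1) * a ^ m * X ^ d * w + X ^ (2 * d) * (C π⁻¹ * w ^ 2 * c) := by
    rw [hc]
    simp only [smul_eq_C_mul]
    linear_combination (X ^ d * w * (((m : K⟦X⟧) + 1) * a ^ m + C π⁻¹ * X ^ d * w * c)) * hππ
  rw [hexp]
  refine add_mem (add_mem (mul_mem (C_mem_integralUpTo hπ1) (pow_mem ha _)) ?_) fun j hj => ?_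
  · exact mul_mem (mul_mem (mul_mem (add_mem (natCast_mem _ m) (one_mem _)) (pow_mem ha _))
      (pow_mem X_mem_integralUpTo _)) hw
  · rw [coeff_X_pow_mul', if_neg (by omega), norm_zero]
    exact zero_le_one

end Field

end PowerSeries

section Padic

variable (p : ℕ) [hp : Fact p.Prime]

theorem prime_dvd_sum_range_choose_mul_self (hp2 : p ≠ 2) :
    p ∣ ∑ r ∈ Finset.range p, (p * r).choose p := by
  have hlucas : ∀ r, (p * r).choose p % p = r % p := fun r => by
    simpa [Nat.ModEq, Nat.mul_mod_right, Nat.mul_div_cancel_left _ hp.out.pos,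
      Nat.div_self hp.out.pos] using
      Choose.choose_modEq_choose_mod_mul_choose_div_nat (p := p) (n := p * r) (k := p)
  rw [Nat.dvd_iff_mod_eq_zero, Finset.sum_nat_mod, Finset.sum_congr rfl fun r _ => hlucas r,
    ← Finset.sum_nat_mod, ← Nat.dvd_iff_mod_eq_zero]
  have h2 : p ∣ (∑ r ∈ Finset.range p, r) * 2 := by
    rw [Finset.sum_range_id_mul_two]
    exact dvd_mul_right p _
  exact ((Nat.coprime_primes hp.out Nat.prime_two).2 hp2).dvd_of_dvd_mul_right h2

theorem prime_dvd_sum_range_choose (hp2 : p ≠ 2) {n j : ℕ} (hn : 2 ≤ n) (hj : j < 2 * p) :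
    p ∣ ∑ r ∈ Finset.range p, (p ^ (n - 1) * r).choose j := by
  rcases j.eq_zero_or_pos with rfl | hj0
  · simp
  have hdvd := Nat.dvd_mul_sum_choose_mul (p ^ (n - 1)) j (Finset.range p)
  by_cases hpj : p ∣ j
  · obtain ⟨c, rfl⟩ := hpj
    obtain rfl : c = 1 := by
      have : c < 2 := Nat.lt_of_mul_lt_mul_left (a := p) (by linarith)
      have : c ≠ 0 := by rintro rfl; simp at hj0
      omega
    rw [mul_one] at hdvd ⊢
    rcases hn.eq_or_lt with rfl | hn3
    · simpa using prime_dvd_sum_range_choose_mul_self p hp2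
    · have : p * p ∣ p * ∑ r ∈ Finset.range p, (p ^ (n - 1) * r).choose p := by
        rw [← sq]
        exact (pow_dvd_pow p (by omega)).trans hdvd
      exact Nat.dvd_of_mul_dvd_mul_left hp.out.pos this
  · exact (hp.out.dvd_mul.1 ((dvd_pow_self p (by omega)).trans hdvd)).resolve_left hpj

theorem coeff_qSeries (n j : ℕ) :
    coeff j (qSeries p n) = ((∑ r ∈ Finset.range p, (p ^ (n - 1) * r).choose j : ℕ) : ℚ_[p]) := by
  simp only [qSeries, map_sum, ← pow_mul, coeff_one_add_X_pow, Nat.cast_sum]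

theorem coeff_qSeries_one (j : ℕ) : coeff j (qSeries p 1) = (p.choose (j + 1) : ℚ_[p]) := by
  have h : qSeries p 1 * X = (1 + X) ^ p - 1 := by
    have := geom_sum_mul (1 + X : ℚ_[p]⟦X⟧) p
    rw [add_sub_cancel_left] at this
    simpa [qSeries] using this
  rw [← coeff_succ_mul_X, h, map_sub, coeff_one_add_X_pow, coeff_one, if_neg j.succ_ne_zero,
    sub_zero]

theorem constantCoeff_inv_smul_qSeries (n : ℕ) :
    constantCoeff ((p : ℚ_[p])⁻¹ • qSeries p n) = 1 := by
  rw [← coeff_zero_eq_constantCoeff_apply, coeff_smul, coeff_qSeries]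
  simp [hp.out.ne_zero]

theorem norm_inv_mul_natCast_le_one {m : ℕ} (h : p ∣ m) : ‖(p : ℚ_[p])⁻¹ * m‖ ≤ 1 := by
  obtain ⟨t, rfl⟩ := h
  rw [Nat.cast_mul, inv_mul_cancel_left₀ (by exact_mod_cast hp.out.ne_zero)]
  exact IsUltrametricDist.norm_natCast_le_one ℚ_[p] t

theorem inv_smul_qSeries_mem_integralUpTo (hp2 : p ≠ 2) {n N : ℕ} (hn : 2 ≤ n)
    (hN : N < 2 * p) :
    (p : ℚ_[p])⁻¹ • qSeries p n ∈ integralUpTo ℚ_[p] N := fun j hj => by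
  rw [coeff_smul, smul_eq_mul, coeff_qSeries]
  exact norm_inv_mul_natCast_le_one p (prime_dvd_sum_range_choose p hp2 hn (by omega))

theorem norm_natCast_mul_coeff_inv_smul_qSeries_sub_one_le {n j : ℕ} (hn : 2 ≤ n) (hj : j ≠ 0) :
    ‖(j : ℚ_[p]) * coeff j ((p : ℚ_[p])⁻¹ • qSeries p n - 1)‖ ≤ ‖(p : ℚ_[p])‖ ^ (n - 2) := by
  obtain ⟨t, ht⟩ := Nat.dvd_mul_sum_choose_mul (p ^ (n - 1)) j (Finset.range p)
  rw [map_sub, coeff_one, if_neg hj, sub_zero, coeff_smul, smul_eq_mul, coeff_qSeries,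
    mul_left_comm, ← Nat.cast_mul, ht, show n - 1 = n - 2 + 1 by omega, pow_succ', Nat.cast_mul,
    Nat.cast_mul, Nat.cast_pow, mul_assoc, inv_mul_cancel_left₀ (by exact_mod_cast hp.out.ne_zero),
    norm_mul, norm_pow]
  exact mul_le_of_le_one_right (by positivity) (IsUltrametricDist.norm_natCast_le_one ℚ_[p] t)

open WithPiTopology

-- Mathlib's pi topology on `ℚ_[p]⟦X⟧` is indexed by `Unit →₀ ℕ`, not by `ℕ`.
theorem coeffTopology_eq : coeffTopology p = WithPiTopology.instTopologicalSpace ℚ_[p] := by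
  refine le_antisymm (continuous_id_iff_le.1 ?_) (continuous_id_iff_le.1 ?_)
  · refine @continuous_pi _ _ _ (coeffTopology p) _ _ fun d => ?_
    have hd : Finsupp.single () (d ()) = d := by ext; simp
    have : (fun f : ℚ_[p]⟦X⟧ => (id f : MvPowerSeries Unit ℚ_[p]) d) = coeff (d ()) := by
      ext f
      rw [coeff, MvPowerSeries.coeff_apply, hd]
      rfl
    rw [this]
    exact @Continuous.comp _ _ _ (coeffTopology p) Pi.topologicalSpace _
      (fun f n => coeff n f) (fun g : ℕ → ℚ_[p] => g (d ()))
      (continuous_apply (d ())) continuous_induced_dom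
  · exact continuous_induced_rng.2 (continuous_pi fun n => continuous_coeff ℚ_[p] n)

theorem lambdaPlus_eq : lambdaPlus p = ∏' n, (p : ℚ_[p])⁻¹ • qSeries p (2 * (n + 1)) := by
  rw [lambdaPlus, coeffTopology_eq]

theorem lambdaMinus_eq : lambdaMinus p = ∏' n, (p : ℚ_[p])⁻¹ • qSeries p (2 * n + 1) := by
  rw [lambdaMinus, coeffTopology_eq]

theorem summable_norm_coeff_inv_smul_qSeries_sub_one (j : ℕ) {m : ℕ → ℕ}
    (hm : ∀ i, i + 2 ≤ m i) :
    Summable fun i => ‖coeff j ((p : ℚ_[p])⁻¹ • qSeries p (m i) - 1)‖ := by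
  rcases eq_or_ne j 0 with rfl | hj
  · simp only [coeff_zero_eq_constantCoeff_apply, map_sub, constantCoeff_inv_smul_qSeries, map_one,
      sub_self, norm_zero]
    exact summable_zero
  have hp1 : ‖(p : ℚ_[p])‖ < 1 := Padic.norm_p_lt_one
  have hj' : 0 < ‖(j : ℚ_[p])‖ := norm_pos_iff.2 (Nat.cast_ne_zero.2 hj)
  refine .of_nonneg_of_le (fun _ => norm_nonneg _) (fun i => ?_)
    ((summable_geometric_of_lt_one (norm_nonneg _) hp1).mul_left ‖(j : ℚ_[p])‖⁻¹)
  rw [le_inv_mul_iff₀ hj', ← norm_mul]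
  exact (norm_natCast_mul_coeff_inv_smul_qSeries_sub_one_le p (by linarith [hm i]) hj).trans
    (pow_le_pow_of_le_one (norm_nonneg _) hp1.le (by have := hm i; omega))

theorem multipliable_inv_smul_qSeries {m : ℕ → ℕ} (hm : ∀ i, i + 2 ≤ m i) :
    Multipliable fun i => (p : ℚ_[p])⁻¹ • qSeries p (m i) := by
  have := multipliable_one_add_of_summable_norm_coeff
    fun j => summable_norm_coeff_inv_smul_qSeries_sub_one p j hm
  simpa only [add_sub_cancel] using this

theorem lambdaPlus_mem_integralUpTo (hp2 : p ≠ 2) {N : ℕ} (hN : N < 2 * p) :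
    lambdaPlus p ∈ integralUpTo ℚ_[p] N := by
  rw [lambdaPlus_eq]
  exact tprod_mem isClosed_integralUpTo fun n =>
    inv_smul_qSeries_mem_integralUpTo p hp2 (by omega) hN

theorem constantCoeff_lambdaPlus : constantCoeff (lambdaPlus p) = 1 := by
  rw [lambdaPlus_eq, (multipliable_inv_smul_qSeries p fun i => by omega).map_tprod _
    (continuous_constantCoeff ℚ_[p])]
  simp only [constantCoeff_inv_smul_qSeries, tprod_one]

theorem exists_lambdaMinus_eq (hp2 : p ≠ 2) {N : ℕ} (hN : N < 2 * p) :
    ∃ u ∈ integralUpTo ℚ_[p] N, lambdaMinus p = (p : ℚ_[p])⁻¹ • qSeries p 1 * u := by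
  refine ⟨∏' n, (p : ℚ_[p])⁻¹ • qSeries p (2 * (n + 1) + 1), tprod_mem isClosed_integralUpTo
    fun n => inv_smul_qSeries_mem_integralUpTo p hp2 (by omega) hN, ?_⟩
  rw [lambdaMinus_eq, tprod_eq_zero_mul' (f := fun n => (p : ℚ_[p])⁻¹ • qSeries p (2 * n + 1))
    (multipliable_inv_smul_qSeries p (m := fun n => 2 * (n + 1) + 1) fun n => by omega)]

theorem exists_inv_smul_qSeries_one_eq (N : ℕ) :
    ∃ b ∈ integralUpTo ℚ_[p] N,
      (p : ℚ_[p])⁻¹ • qSeries p 1 = b + (p : ℚ_[p])⁻¹ • X ^ (p - 1) := by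
  refine ⟨(p : ℚ_[p])⁻¹ • (qSeries p 1 - X ^ (p - 1)), fun j _ => ?_,
    by rw [smul_sub, sub_add_cancel]⟩
  rw [coeff_smul, map_sub, coeff_qSeries_one, coeff_X_pow, smul_eq_mul]
  have := hp.out.pos
  rcases lt_trichotomy (j + 1) p with h | h | h
  · rw [if_neg (show j ≠ p - 1 by omega), sub_zero]
    exact norm_inv_mul_natCast_le_one p (hp.out.dvd_choose_self (by omega) h)
  · rw [if_pos (show j = p - 1 by omega), show p.choose (j + 1) = 1 by rw [h, Nat.choose_self]]
    simp
  · rw [if_neg (show j ≠ p - 1 by omega), Nat.choose_eq_zero_of_lt h]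
    simp

end Padic

/-- If `p + 2 ≤ k ≤ 2p - 1` and `(λ₋ · λ₊⁻¹)^(k-1) = Σ c_i X^i`, then
`p · c_i ∈ ℤ_p` for `0 ≤ i ≤ k - 2`. -/
theorem padic_valuation_of_coeffs_of_lambda_ratio_pow
    (p : ℕ) [Fact p.Prime] (k : ℕ) (hk₁ : p + 2 ≤ k) (hk₂ : k ≤ 2 * p - 1) :
    ∀ i ≤ k - 2,
      ‖(p : ℚ_[p]) *
        PowerSeries.coeff (R := ℚ_[p]) i ((lambdaMinus p * (lambdaPlus p)⁻¹) ^ (k - 1))‖ ≤ 1 := by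
  intro i hi
  have hp2 : p ≠ 2 := by omega
  have hN : 2 * p - 3 < 2 * p := by omega
  obtain ⟨u, hu, hminus⟩ := exists_lambdaMinus_eq p hp2 hN
  obtain ⟨b, hb, hq⟩ := exists_inv_smul_qSeries_one_eq p (2 * p - 3)
  set w := u * (lambdaPlus p)⁻¹
  have hw : w ∈ integralUpTo ℚ_[p] (2 * p - 3) := mul_mem hu
    (inv_mem_integralUpTo (constantCoeff_lambdaPlus p) (lambdaPlus_mem_integralUpTo p hp2 hN))
  have hF : lambdaMinus p * (lambdaPlus p)⁻¹ = b * w + (p : ℚ_[p])⁻¹ • (X ^ (p - 1) * w) := by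
    rw [hminus, hq, add_mul, add_mul, smul_mul_assoc, smul_mul_assoc, mul_assoc, mul_assoc]
  have key := smul_pow_add_inv_smul_X_pow_mul_mem (d := p - 1) (by omega) (mul_mem hb hw) hw
    (π := (p : ℚ_[p])) (by exact_mod_cast (Fact.out : p.Prime).ne_zero)
    (IsUltrametricDist.norm_natCast_le_one ℚ_[p] p) (k - 2)
  rw [← hF, show k - 2 + 1 = k - 1 by omega] at key
  simpa [coeff_smul] using key i (by omega)
end

section
/- Let p be a prime, F a field of characteristic p, k an integer with k ≥ p+3, λ a nonzero element of F, and u ∈ F[[X]] a power series with constant coefficient 1. Then there exists a unique power series z ∈ F[[X]] with constant coefficient 1 such that z − u·φ(z) + λ⁻²·X^{k−p−2}·φ(φ(z)) = 0. -/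
/-!
Rewriting the equation as `z = T z` with `T z = u·φ(z) - λ⁻²·X^(k-p-2)·φ²(z)`, the map `T`
preserves constant coefficients (as `u(0) = 1` and `k - p - 2 > 0`), and since `φ` multiplies
`X`-adic valuations by `p ≥ 2`, it strictly improves the `X`-adic agreement of two series with
the same constant coefficient. As in Banach's fixed point theorem, the iterates of `T` starting
at `1` converge coefficientwise to the unique solution.
-/

open PowerSeries

/-- Substitution of the power series `g` (of positive order) into `f`: the coefficient
of `X^j` in `f(g)` is `Σ_{n ≤ j} f_n · [X^j](g^n)`. -/
noncomputable def substSeries {R : Type*} [CommRing R] (g f : PowerSeries R) :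
    PowerSeries R :=
  PowerSeries.mk fun j =>
    ∑ n ∈ Finset.range (j + 1),
      PowerSeries.coeff n f * PowerSeries.coeff j (g ^ n)

/-- `φ : F[[X]] → F[[X]]` is the substitution `X ↦ X^p` (the reduction mod `p` of
`X ↦ (1+X)^p - 1`). -/
noncomputable def phiP (p : ℕ) {F : Type*} [CommRing F] (f : PowerSeries F) :
    PowerSeries F :=
  substSeries (PowerSeries.X ^ p) f

namespace PowerSeries

variable {R : Type*} [CommRing R]

theorem eq_zero_of_forall_X_pow_dvd {f : R⟦X⟧} (h : ∀ n, X ^ n ∣ f) : f = 0 := by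
  ext n
  exact X_pow_dvd_iff.mp (h (n + 1)) n n.lt_succ_self

section FixedPoint

def IsXAdicContraction (T : R⟦X⟧ → R⟦X⟧) : Prop :=
  ∀ n ≠ 0, ∀ z w, X ^ n ∣ z - w → X ^ (n + 1) ∣ T z - T w

variable {T : R⟦X⟧ → R⟦X⟧}

theorem X_pow_succ_dvd_iterate_succ_sub (hT0 : ∀ z, constantCoeff (T z) = constantCoeff z)
    (hT : IsXAdicContraction T) (z : R⟦X⟧) (n : ℕ) :
    X ^ (n + 1) ∣ T^[n + 1] z - T^[n] z := by
  induction n with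
  | zero => simpa [X_dvd_iff, sub_eq_zero] using hT0 z
  | succ n ih =>
    simpa only [Function.iterate_succ_apply'] using hT (n + 1) n.succ_ne_zero _ _ ih

theorem X_pow_succ_dvd_iterate_sub_of_le (hT0 : ∀ z, constantCoeff (T z) = constantCoeff z)
    (hT : IsXAdicContraction T) (z : R⟦X⟧) {i j : ℕ} (hij : i ≤ j) :
    X ^ (i + 1) ∣ T^[j] z - T^[i] z := by
  induction j, hij using Nat.le_induction with
  | base => simp
  | succ j hij ih =>
    rw [← sub_add_sub_cancel]
    exact dvd_add ((pow_dvd_pow X (by omega)).trans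
      (X_pow_succ_dvd_iterate_succ_sub hT0 hT z j)) ih

theorem X_pow_succ_dvd_mk_coeff_iterate_sub (hT0 : ∀ z, constantCoeff (T z) = constantCoeff z)
    (hT : IsXAdicContraction T) (z : R⟦X⟧) (n : ℕ) :
    X ^ (n + 1) ∣ mk (fun i ↦ coeff i (T^[i] z)) - T^[n] z := by
  refine X_pow_dvd_iff.mpr fun i hi ↦ ?_
  have h := X_pow_dvd_iff.mp (X_pow_succ_dvd_iterate_sub_of_le hT0 hT z (j := n) (by omega)) i
    i.lt_succ_self
  rw [map_sub, sub_eq_zero] at h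
  rw [map_sub, coeff_mk, h, sub_self]

theorem eq_of_fixed_of_constantCoeff_eq (hT : IsXAdicContraction T) {z w : R⟦X⟧}
    (hz : T z = z) (hw : T w = w) (hzw : constantCoeff z = constantCoeff w) : z = w := by
  have hdvd : ∀ n, X ^ (n + 1) ∣ z - w := by
    intro n
    induction n with
    | zero => simpa [X_dvd_iff, sub_eq_zero] using hzw
    | succ n ih => simpa only [hz, hw] using hT (n + 1) n.succ_ne_zero _ _ ih
  refine sub_eq_zero.mp (eq_zero_of_forall_X_pow_dvd fun n ↦ ?_)
  exact (pow_dvd_pow X n.le_succ).trans (hdvd n)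

theorem existsUnique_constantCoeff_eq_and_fixed
    (hT0 : ∀ z, constantCoeff (T z) = constantCoeff z) (hT : IsXAdicContraction T) (a : R) :
    ∃! z, constantCoeff z = a ∧ T z = z := by
  obtain ⟨z, hz⟩ : ∃ z, ∀ n, X ^ (n + 1) ∣ z - T^[n] (C a) :=
    ⟨_, X_pow_succ_dvd_mk_coeff_iterate_sub hT0 hT (C a)⟩
  have hza : constantCoeff z = a := by simpa [X_dvd_iff, sub_eq_zero] using hz 0
  have hTz : T z = z := by
    refine sub_eq_zero.mp (eq_zero_of_forall_X_pow_dvd fun n ↦ ?_)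
    have hTz_sub : X ^ (n + 2) ∣ T z - T^[n + 1] (C a) := by
      simpa only [Function.iterate_succ_apply'] using hT (n + 1) n.succ_ne_zero _ _ (hz n)
    rw [← sub_sub_sub_cancel_right _ _ (T^[n + 1] (C a))]
    exact (pow_dvd_pow X (by omega)).trans (dvd_sub hTz_sub (hz (n + 1)))
  exact ⟨z, ⟨hza, hTz⟩, fun w ⟨hwa, hTw⟩ ↦
    eq_of_fixed_of_constantCoeff_eq hT hTw hTz (hwa.trans hza.symm)⟩

end FixedPoint

end PowerSeries

section Frobenius

variable {R : Type*} [CommRing R]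

theorem constantCoeff_phiP (p : ℕ) (f : R⟦X⟧) :
    constantCoeff (phiP p f) = constantCoeff f := by
  rw [← coeff_zero_eq_constantCoeff_apply, ← coeff_zero_eq_constantCoeff_apply]
  simp [phiP, substSeries]

theorem phiP_sub (p : ℕ) (f g : R⟦X⟧) : phiP p (f - g) = phiP p f - phiP p g := by
  ext j
  simp [phiP, substSeries, sub_mul]

theorem X_pow_mul_dvd_phiP {p n : ℕ} {f : R⟦X⟧} (h : X ^ n ∣ f) :
    X ^ (p * n) ∣ phiP p f := by
  rw [X_pow_dvd_iff] at h ⊢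
  intro j hj
  rw [phiP, substSeries, coeff_mk]
  refine Finset.sum_eq_zero fun i _ ↦ ?_
  by_cases hi : i < n
  · rw [h i hi, zero_mul]
  · have : p * n ≤ p * i := Nat.mul_le_mul_left p (not_lt.mp hi)
    rw [← pow_mul, coeff_X_pow, if_neg (by omega), mul_zero]

noncomputable def phiRecursion (p m : ℕ) (u : R⟦X⟧) (c : R) (z : R⟦X⟧) : R⟦X⟧ :=
  u * phiP p z - C c * X ^ m * phiP p (phiP p z)

variable {p m : ℕ} {u : R⟦X⟧} {c : R}

theorem constantCoeff_phiRecursion (hu : constantCoeff u = 1) (hm : m ≠ 0) (z : R⟦X⟧) :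
    constantCoeff (phiRecursion p m u c z) = constantCoeff z := by
  simp [phiRecursion, constantCoeff_phiP, hu, hm]

theorem isXAdicContraction_phiRecursion (hp : 2 ≤ p) :
    IsXAdicContraction (phiRecursion p m u c) := by
  intro n hn z w h
  have hφ : X ^ (n + 1) ∣ phiP p (z - w) :=
    (pow_dvd_pow X (by nlinarith [Nat.pos_of_ne_zero hn])).trans (X_pow_mul_dvd_phiP h)
  have hφφ : X ^ (n + 1) ∣ phiP p (phiP p (z - w)) :=
    (pow_dvd_pow X (by nlinarith)).trans (X_pow_mul_dvd_phiP hφ)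
  have hsub : phiRecursion p m u c z - phiRecursion p m u c w =
      u * phiP p (z - w) - C c * X ^ m * phiP p (phiP p (z - w)) := by
    simp only [phiRecursion, phiP_sub]
    ring
  rw [hsub]
  exact dvd_sub (hφ.mul_left u) (hφφ.mul_left _)

end Frobenius

theorem exists_unique_fixed_point_general (p : ℕ) (hp : p.Prime) (F : Type*) [Field F]
    (k : ℕ) (hk : p + 3 ≤ k) (lam : F)
    (u : PowerSeries F) (hu : PowerSeries.constantCoeff u = 1) :
    ∃! z : PowerSeries F, PowerSeries.constantCoeff z = 1 ∧
      z - u * phiP p z +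
        PowerSeries.C (lam ^ 2)⁻¹ * PowerSeries.X ^ (k - p - 2) * phiP p (phiP p z) = 0 := by
  refine (existsUnique_congr fun z ↦ and_congr_right' ?_).mp
    (existsUnique_constantCoeff_eq_and_fixed (T := phiRecursion p (k - p - 2) u (lam ^ 2)⁻¹)
      (constantCoeff_phiRecursion hu (by omega))
      (isXAdicContraction_phiRecursion hp.two_le) 1)
  rw [eq_comm, ← sub_eq_zero, phiRecursion, sub_sub_eq_add_sub, add_sub_right_comm]

/-- For `k ≥ p + 3`, `λ ≠ 0` and `u ∈ 1 + X·F[[X]]`, there is a unique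
`z ∈ 1 + X·F[[X]]` such that `z - u·φ(z) + λ⁻²·X^(k-p-2)·φ²(z) = 0`. -/
theorem exists_unique_fixed_point (p : ℕ) (hp : p.Prime) (F : Type*) [Field F]
    [CharP F p] (k : ℕ) (hk : p + 3 ≤ k) (lam : F) (hlam : lam ≠ 0)
    (u : PowerSeries F) (hu : PowerSeries.constantCoeff u = 1) :
    ∃! z : PowerSeries F, PowerSeries.constantCoeff z = 1 ∧
      z - u * phiP p z +
        PowerSeries.C (lam ^ 2)⁻¹ * PowerSeries.X ^ (k - p - 2) * phiP p (phiP p z) = 0 :=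
  exists_unique_fixed_point_general p hp F k hk lam u hu
end

section
/- Let p be a prime and F a field of characteristic p. For every 2×2 matrix Q over F[[X]] whose constant-coefficient matrix Q(0) ∈ M₂(F) is invertible (equivalently Q ∈ GL₂(F[[X]])), there exists a matrix M ∈ M₂(F[[X]]) with M ≡ Id modulo X (hence M invertible over F[[X]]) such that Q·φ(M) = M·Q(0), i.e. M⁻¹·Q·φ(M) equals the constant matrix Q(0). -/
open PowerSeries

/-!
Write `M = Σ c_j X^j` with matrix coefficients `c_j`. Comparing coefficients of `X^j`, the
equation `Q·φ(M) = M·Q(0)` becomes `Σ_{k+l=j, p ∣ l} Q_k c_{l/p} = c_j Q(0)`. For `j ≥ 1`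
every index `l/p` on the left is `< j` because `p ≥ 2`, so starting from `c_0 = 1` the equation
determines `c_j` recursively after multiplying on the right by `Q(0)⁻¹`; for `j = 0` it holds
since `c_0 = 1`.
-/

open Finset

theorem coeff_phiP {R : Type*} [CommRing R] {p : ℕ} (hp : 0 < p) (f : R⟦X⟧) (j : ℕ) :
    coeff j (phiP p f) = if p ∣ j then coeff (j / p) f else 0 := by
  simp only [phiP, substSeries, coeff_mk, ← pow_mul, coeff_X_pow]
  split_ifs with h
  · obtain ⟨m, rfl⟩ := h
    have hm : m ∈ range (p * m + 1) :=
      mem_range.mpr (Nat.lt_succ_of_le (Nat.le_mul_of_pos_left m hp))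
    rw [sum_eq_single_of_mem m hm]
    · simp [Nat.mul_div_cancel_left m hp]
    · intro i _ hi
      simp [(mul_right_injective₀ hp.ne').ne hi.symm]
  · refine sum_eq_zero fun i _ => ?_
    simp [show j ≠ p * i from fun hi => h ⟨i, hi⟩]

namespace Matrix

variable {l m n R : Type*} [CommRing R]

theorem ext_map_coeff {M N : Matrix l n R⟦X⟧} (h : ∀ j, M.map (coeff j) = N.map (coeff j)) :
    M = N :=
  ext fun a b => PowerSeries.ext fun j => congrFun₂ (h j) a b

theorem map_coeff_mul [Fintype m] (M : Matrix l m R⟦X⟧) (N : Matrix m n R⟦X⟧) (j : ℕ) :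
    (M * N).map (coeff j) = ∑ x ∈ antidiagonal j, M.map (coeff x.1) * N.map (coeff x.2) := by
  ext a b
  simp only [map_apply, mul_apply, map_sum, coeff_mul, sum_apply]
  exact sum_comm

theorem map_coeff_mul_map_C [Fintype m] (M : Matrix l m R⟦X⟧) (A : Matrix m n R) (j : ℕ) :
    (M * A.map C).map (coeff j) = M.map (coeff j) * A := by
  ext a b
  simp [mul_apply, coeff_mul_C]

theorem map_coeff_map_phiP {p : ℕ} (hp : 0 < p) (M : Matrix m n R⟦X⟧) (j : ℕ) :
    (M.map (phiP p)).map (coeff j) = if p ∣ j then M.map (coeff (j / p)) else 0 := by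
  ext a b
  split_ifs <;> simp [coeff_phiP hp, *]

noncomputable def ofCoeffs (c : ℕ → Matrix m n R) : Matrix m n R⟦X⟧ :=
  of fun a b => mk fun j => c j a b

@[simp]
theorem map_coeff_ofCoeffs (c : ℕ → Matrix m n R) (j : ℕ) :
    (ofCoeffs c).map (coeff j) = c j := by
  ext a b
  simp [ofCoeffs]

end Matrix

section Dwork

variable {n R : Type*} [Fintype n] [DecidableEq n] [CommRing R]

noncomputable def dworkCoeff (p : ℕ) (hp : 1 < p) (Q : Matrix n n R⟦X⟧) (B : Matrix n n R) :
    ℕ → Matrix n n R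
  | 0 => 1
  | j + 1 => (∑ x ∈ (antidiagonal (j + 1)).attach,
      Q.map (coeff x.1.1) * if p ∣ x.1.2 then dworkCoeff p hp Q B (x.1.2 / p) else 0) * B
decreasing_by
  exact (Nat.div_le_div_right (HasAntidiagonal.antidiagonal.snd_le x.2)).trans_lt
    (Nat.div_lt_self j.succ_pos hp)

theorem dworkCoeff_succ (p : ℕ) (hp : 1 < p) (Q : Matrix n n R⟦X⟧) (B : Matrix n n R)
    (j : ℕ) :
    dworkCoeff p hp Q B (j + 1) = (∑ x ∈ antidiagonal (j + 1),
      Q.map (coeff x.1) * if p ∣ x.2 then dworkCoeff p hp Q B (x.2 / p) else 0) * B := by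
  rw [dworkCoeff, sum_attach (antidiagonal (j + 1)) fun x =>
    Q.map (coeff x.1) * if p ∣ x.2 then dworkCoeff p hp Q B (x.2 / p) else 0]

theorem sum_antidiagonal_dworkCoeff {p : ℕ} (hp : 1 < p) (Q : Matrix n n R⟦X⟧)
    {B : Matrix n n R} (hB : B * Q.map constantCoeff = 1) (j : ℕ) :
    ∑ x ∈ antidiagonal j,
        Q.map (coeff x.1) * (if p ∣ x.2 then dworkCoeff p hp Q B (x.2 / p) else 0) =
      dworkCoeff p hp Q B j * Q.map constantCoeff := by
  cases j with
  | zero => simp [dworkCoeff, coeff_zero_eq_constantCoeff]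
  | succ j => rw [dworkCoeff_succ, mul_assoc, hB, mul_one]

theorem exists_map_constantCoeff_eq_one_and_mul_map_phiP_eq {p : ℕ} (hp : 1 < p)
    (Q : Matrix n n R⟦X⟧) (hQ : IsUnit (Q.map constantCoeff)) :
    ∃ M : Matrix n n R⟦X⟧, M.map constantCoeff = 1 ∧
      Q * M.map (phiP p) = M * (Q.map constantCoeff).map C := by
  obtain ⟨B, hB⟩ := hQ.exists_left_inv
  refine ⟨Matrix.ofCoeffs (dworkCoeff p hp Q B), ?_, Matrix.ext_map_coeff fun j => ?_⟩
  · rw [← coeff_zero_eq_constantCoeff, Matrix.map_coeff_ofCoeffs, dworkCoeff]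
  · rw [Matrix.map_coeff_mul_map_C, Matrix.map_coeff_mul, Matrix.map_coeff_ofCoeffs,
      ← sum_antidiagonal_dworkCoeff hp Q hB]
    refine sum_congr rfl fun x _ => ?_
    rw [Matrix.map_coeff_map_phiP (zero_lt_one.trans hp)]
    split_ifs <;> simp

end Dwork

theorem exists_trivialization_general (p : ℕ) (hp : p.Prime) (F : Type*) [Field F]
    (Q : Matrix (Fin 2) (Fin 2) (PowerSeries F))
    (hQ : IsUnit (Q.map (PowerSeries.constantCoeff (R := F)))) :
    ∃ M : Matrix (Fin 2) (Fin 2) (PowerSeries F),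
      M.map (PowerSeries.constantCoeff (R := F)) = 1 ∧
      Q * M.map (phiP p) =
        M * (Q.map (PowerSeries.constantCoeff (R := F))).map (PowerSeries.C (R := F)) :=
  exists_map_constantCoeff_eq_one_and_mul_map_phiP_eq hp.one_lt Q hQ

/-- Dwork's trick mod `p`: if `Q ∈ M₂(F[[X]])` has invertible constant term `Q(0)`,
there is `M ≡ Id mod X` with `Q·φ(M) = M·Q(0)`. -/
theorem exists_trivialization (p : ℕ) (hp : p.Prime) (F : Type*) [Field F] [CharP F p]
    (Q : Matrix (Fin 2) (Fin 2) (PowerSeries F))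
    (hQ : IsUnit (Q.map (PowerSeries.constantCoeff (R := F)))) :
    ∃ M : Matrix (Fin 2) (Fin 2) (PowerSeries F),
      M.map (PowerSeries.constantCoeff (R := F)) = 1 ∧
      Q * M.map (phiP p) =
        M * (Q.map (PowerSeries.constantCoeff (R := F))).map (PowerSeries.C (R := F)) :=
  exists_trivialization_general p hp F Q hQ
end

section
/- Let p be a prime, k ≥ 2 an integer, a_p ∈ ℤ_p with v_p(a_p) ≥ 1, and α ∈ ℤ_p[[X]] a power series with constant coefficient a_p. Set q = ((1+X)^p − 1)/X ∈ ℤ_p[X] and let P ∈ M₂(ℤ_p[[X]]) be the matrix with rows (0, −1) and (q^{k−1}, α). If H ∈ M₂(ℤ_p[[X]]) satisfies H ≡ Id modulo X^{k−1} and H·P = P·φ(H), then H = Id. (This is the uniqueness part of the paper's construction of the Wach module: two matrices G, G' with P·φ(G) = G·γ(P), P·φ(G') = G'·γ(P) and G ≡ G' mod X^{k−1} must coincide, since H = G'G⁻¹ then satisfies the above.) -/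
/-!
Put `N = H - 1`, so that `N P = P φ(N)`. If `X^m` divides `N`, then `φ` multiplies the
`X^m`-coefficient of each entry by `p^m`, so the matrix `C` of `X^m`-coefficients of `N`
satisfies `C P(0) = p^m P(0) C`. For `m ≥ k - 1` the matrices `P(0)` and `p^m P(0)` have no
common eigenvalue, because `p ∣ a_p`; hence `C = 0` and `X^(m+1)` divides `N`. Starting from
`X^(k-1) ∣ N`, induction gives `N = 0`.
-/

open PowerSeries

/-- `φ : R[[X]] → R[[X]]` is the substitution `X ↦ (1+X)^p - 1`. -/
noncomputable def phiCycl (p : ℕ) {R : Type*} [CommRing R] (f : PowerSeries R) :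
    PowerSeries R :=
  substSeries ((1 + PowerSeries.X) ^ p - 1) f

/-- `q = ((1+X)^p - 1)/X = Σ_{j=0}^{p-1} (1+X)^j ∈ ℤ_p[[X]]`. -/
noncomputable def qZ (p : ℕ) [Fact p.Prime] : PowerSeries ℤ_[p] :=
  ∑ j ∈ Finset.range p, (1 + PowerSeries.X) ^ j

section SubstSeries

variable {R : Type*} [CommRing R]

@[simp]
lemma coeff_substSeries (g f : R⟦X⟧) (j : ℕ) :
    coeff j (substSeries g f) = ∑ n ∈ Finset.range (j + 1), coeff n f * coeff j (g ^ n) :=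
  coeff_mk _ _

lemma substSeries_sub (g f₁ f₂ : R⟦X⟧) :
    substSeries g (f₁ - f₂) = substSeries g f₁ - substSeries g f₂ := by
  ext j
  simp [sub_mul]

lemma substSeries_zero (g : R⟦X⟧) : substSeries g 0 = 0 := by
  ext j
  simp

lemma substSeries_one (g : R⟦X⟧) : substSeries g 1 = 1 := by
  ext j
  rw [coeff_substSeries, Finset.sum_eq_single 0 (fun n _ hn ↦ by simp [coeff_one, hn]) (by simp)]
  simp

lemma coeff_pow_self_of_constantCoeff_eq_zero {g : R⟦X⟧} (hg : constantCoeff g = 0) (n : ℕ) :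
    coeff n (g ^ n) = coeff 1 g ^ n := by
  obtain ⟨g', rfl⟩ := X_dvd_iff.mpr hg
  rw [mul_pow, coeff_X_pow_mul', if_pos le_rfl, Nat.sub_self, coeff_zero_eq_constantCoeff,
    map_pow, coeff_succ_X_mul, coeff_zero_eq_constantCoeff]

lemma X_pow_dvd_substSeries {g f : R⟦X⟧} {m : ℕ} (hf : X ^ m ∣ f) :
    X ^ m ∣ substSeries g f := by
  refine X_pow_dvd_iff.mpr fun j hj ↦ (coeff_substSeries g f j).trans <|
    Finset.sum_eq_zero fun n hn ↦ ?_
  rw [X_pow_dvd_iff.mp hf n ((Nat.lt_succ_iff.mp (Finset.mem_range.mp hn)).trans_lt hj),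
    zero_mul]

lemma coeff_substSeries_of_X_pow_dvd {g f : R⟦X⟧} (hg : constantCoeff g = 0) {m : ℕ}
    (hf : X ^ m ∣ f) : coeff m (substSeries g f) = coeff 1 g ^ m * coeff m f := by
  rw [coeff_substSeries, Finset.sum_eq_single m, coeff_pow_self_of_constantCoeff_eq_zero hg,
    mul_comm]
  · exact fun n hn hnm ↦ by
      rw [X_pow_dvd_iff.mp hf n ((Nat.lt_succ_iff.mp (Finset.mem_range.mp hn)).lt_of_ne hnm),
        zero_mul]
  · simp

end SubstSeries

section PhiCycl

variable {R : Type*} [CommRing R]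

lemma phiCycl_zero (p : ℕ) : phiCycl p (0 : R⟦X⟧) = 0 :=
  substSeries_zero _

lemma phiCycl_one (p : ℕ) : phiCycl p (1 : R⟦X⟧) = 1 :=
  substSeries_one _

lemma phiCycl_sub (p : ℕ) (f₁ f₂ : R⟦X⟧) :
    phiCycl p (f₁ - f₂) = phiCycl p f₁ - phiCycl p f₂ :=
  substSeries_sub _ _ _

lemma X_pow_dvd_phiCycl (p : ℕ) {f : R⟦X⟧} {m : ℕ} (hf : X ^ m ∣ f) :
    X ^ m ∣ phiCycl p f :=
  X_pow_dvd_substSeries hf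

lemma coeff_phiCycl_of_X_pow_dvd (p : ℕ) {f : R⟦X⟧} {m : ℕ} (hf : X ^ m ∣ f) :
    coeff m (phiCycl p f) = (p : R) ^ m * coeff m f := by
  rw [phiCycl, coeff_substSeries_of_X_pow_dvd (by simp) hf]
  simp [coeff_one_pow]

end PhiCycl

section LeadingCoeff

variable {R : Type*} [CommRing R] {m : ℕ}

lemma X_pow_succ_dvd_of_coeff_eq_zero {f : R⟦X⟧} (hf : X ^ m ∣ f) (hm : coeff m f = 0) :
    X ^ (m + 1) ∣ f :=
  X_pow_dvd_iff.mpr fun n hn ↦ (Nat.lt_succ_iff_lt_or_eq.mp hn).elim (X_pow_dvd_iff.mp hf n)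
    (· ▸ hm)

lemma coeff_mul_of_X_pow_dvd_left {f : R⟦X⟧} (hf : X ^ m ∣ f) (g : R⟦X⟧) :
    coeff m (f * g) = coeff m f * constantCoeff g := by
  obtain ⟨f', rfl⟩ := hf
  rw [mul_assoc, coeff_X_pow_mul', coeff_X_pow_mul', if_pos le_rfl, if_pos le_rfl, Nat.sub_self,
    coeff_zero_eq_constantCoeff, map_mul]

lemma coeff_mul_of_X_pow_dvd_right {f : R⟦X⟧} (hf : X ^ m ∣ f) (g : R⟦X⟧) :
    coeff m (g * f) = constantCoeff g * coeff m f := by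
  rw [mul_comm, coeff_mul_of_X_pow_dvd_left hf, mul_comm]

variable {l n o : Type*} [Fintype n]

lemma Matrix.map_coeff_mul_of_X_pow_dvd_left {N : Matrix l n R⟦X⟧}
    (hN : ∀ i j, X ^ m ∣ N i j) (M : Matrix n o R⟦X⟧) :
    (N * M).map (coeff m) = N.map (coeff m) * M.map constantCoeff := by
  ext i j
  simp [Matrix.mul_apply, coeff_mul_of_X_pow_dvd_left (hN _ _)]

lemma Matrix.map_coeff_mul_of_X_pow_dvd_right {N : Matrix n o R⟦X⟧}
    (hN : ∀ i j, X ^ m ∣ N i j) (M : Matrix l n R⟦X⟧) :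
    (M * N).map (coeff m) = M.map constantCoeff * N.map (coeff m) := by
  ext i j
  simp [Matrix.mul_apply, coeff_mul_of_X_pow_dvd_right (hN _ _)]

lemma Matrix.map_coeff_mul_eq_smul_of_mul_eq_mul_map_phiCycl (p : ℕ) {N P : Matrix n n R⟦X⟧}
    (hNP : N * P = P * N.map (phiCycl p)) (hN : ∀ i j, X ^ m ∣ N i j) :
    N.map (coeff m) * P.map constantCoeff =
      (p : R) ^ m • (P.map constantCoeff * N.map (coeff m)) := by
  have hφN : (N.map (phiCycl p)).map (coeff m) = (p : R) ^ m • N.map (coeff m) := by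
    ext i j
    exact coeff_phiCycl_of_X_pow_dvd p (hN i j)
  rw [← Matrix.map_coeff_mul_of_X_pow_dvd_left hN, hNP,
    Matrix.map_coeff_mul_of_X_pow_dvd_right (N := N.map (phiCycl p))
      (fun i j ↦ X_pow_dvd_phiCycl p (hN i j)), hφN,
    Matrix.mul_smul]

end LeadingCoeff

/-- `(1 - t)² d (d (1 + t)² - t a²)` is the resultant of the characteristic polynomials
`x² - a x + d` of `A = !![0, -1; d, a]` and `x² - t a x + t² d` of `t • A`. -/
lemma Matrix.eq_zero_of_mul_eq_smul_mul_fin_two {R : Type*} [CommRing R] [IsDomain R]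
    {a d t : R} (ht : t ≠ 1) (hd : d ≠ 0) (hres : d * (1 + t) ^ 2 ≠ t * a ^ 2)
    {C : Matrix (Fin 2) (Fin 2) R} (hC : C * !![0, -1; d, a] = t • (!![0, -1; d, a] * C)) :
    C = 0 := by
  have entry (i j : Fin 2) := congrFun (congrFun hC i) j
  have e00 : C 0 1 * d = -(t * C 1 0) := by
    simpa [Matrix.mul_apply, Matrix.vecMul, dotProduct, Fin.sum_univ_two] using entry 0 0
  have e01 : C 0 1 * a - C 0 0 = -(t * C 1 1) := by
    simpa [Matrix.mul_apply, Matrix.vecMul, dotProduct, Fin.sum_univ_two, neg_add_eq_sub]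
      using entry 0 1
  have e10 : C 1 1 * d = t * (d * C 0 0 + a * C 1 0) := by
    simpa [Matrix.mul_apply, Matrix.vecMul, dotProduct, Fin.sum_univ_two] using entry 1 0
  have e11 : C 1 1 * a - C 1 0 = t * (d * C 0 1 + a * C 1 1) := by
    simpa [Matrix.mul_apply, Matrix.vecMul, dotProduct, Fin.sum_univ_two, neg_add_eq_sub]
      using entry 1 1
  have hR : (1 - t) * d * (d * (1 + t) ^ 2 - t * a ^ 2) ≠ 0 :=
    mul_ne_zero (mul_ne_zero (sub_ne_zero.mpr ht.symm) hd) (sub_ne_zero.mpr hres)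
  have h11 : C 1 1 = 0 := (mul_eq_zero.mp (by
    linear_combination
      d * (1 + t) * (e10 - t * d * e01 - t * a * e11) + t * a * d * (e00 + t * e11) :
      (1 - t) * d * (d * (1 + t) ^ 2 - t * a ^ 2) * C 1 1 = 0)).resolve_left hR
  have h01 : C 0 1 = 0 := (mul_eq_zero.mp (by
    linear_combination (d * (1 + t) - t * a ^ 2) * (e00 + t * e11) -
      t * a * (e10 - t * d * e01 - t * a * e11) :
      (1 - t) * d * (d * (1 + t) ^ 2 - t * a ^ 2) * C 0 1 = 0)).resolve_left hR
  have h00 : C 0 0 = 0 := by linear_combination -e01 + a * h01 + t * h11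
  have h10 : C 1 0 = 0 := by linear_combination -e11 + (a - t * a) * h11 - t * d * h01
  ext i j
  fin_cases i <;> fin_cases j <;> assumption

lemma pow_mul_one_add_pow_sq_ne_pow_mul_sq {R : Type*} [CommRing R] [IsDomain R] {π a : R}
    (hπ : Prime π) (ha : π ∣ a) {e m : ℕ} (hem : e ≤ m) (hm : m ≠ 0) :
    π ^ e * (1 + π ^ m) ^ 2 ≠ π ^ m * a ^ 2 := by
  intro h
  obtain ⟨b, rfl⟩ := ha
  have hsplit : π ^ m = π ^ e * π ^ (m - e) := by rw [← pow_add, Nat.add_sub_cancel' hem]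
  have hsq : (1 + π ^ m) ^ 2 = π * (π ^ (m - e) * π * b ^ 2) :=
    mul_left_cancel₀ (pow_ne_zero e hπ.ne_zero) (by rw [h, hsplit]; ring)
  have hsq_sub_one : π ∣ (1 + π ^ m) ^ 2 - 1 := by
    rw [show (1 + π ^ m) ^ 2 - 1 = π ^ m * (2 + π ^ m) by ring]
    exact (dvd_pow_self π hm).mul_right _
  have hone : π ∣ 1 := by simpa using dvd_sub (Dvd.intro _ hsq.symm) hsq_sub_one
  exact hπ.not_isUnit (isUnit_of_dvd_one hone)

/-- Uniqueness in the construction of the Wach module: if `v_p(a_p) ≥ 1`,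
`P = [[0,-1],[q^(k-1),α]]` with `α(0) = a_p`, and `H ≡ Id mod X^(k-1)` satisfies
`H·P = P·φ(H)`, then `H = Id`. -/
theorem wach_uniqueness (p : ℕ) [Fact p.Prime] (k : ℕ) (hk : 2 ≤ k)
    (a : ℤ_[p]) (ha : (p : ℤ_[p]) ∣ a)
    (α : PowerSeries ℤ_[p]) (hα : PowerSeries.constantCoeff α = a)
    (H : Matrix (Fin 2) (Fin 2) (PowerSeries ℤ_[p]))
    (hH : ∀ i j, (PowerSeries.X : PowerSeries ℤ_[p]) ^ (k - 1) ∣ (H - 1) i j)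
    (hHP : H * !![0, -1; (qZ p) ^ (k - 1), α] =
      !![0, -1; (qZ p) ^ (k - 1), α] * H.map (phiCycl p)) :
    H = 1 := by
  set P : Matrix (Fin 2) (Fin 2) ℤ_[p]⟦X⟧ := !![0, -1; (qZ p) ^ (k - 1), α]
  have hN : (H - 1) * P = P * (H - 1).map (phiCycl p) := by
    rw [Matrix.map_sub _ (phiCycl_sub p), Matrix.map_one _ (phiCycl_zero p) (phiCycl_one p),
      sub_mul, mul_sub, hHP, one_mul, mul_one]
  have hP₀ : P.map constantCoeff = !![0, -1; (p : ℤ_[p]) ^ (k - 1), a] := by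
    ext i j
    fin_cases i <;> fin_cases j <;> simp [P, qZ, hα]
  have hp : Prime (p : ℤ_[p]) := PadicInt.prime_p
  have hdvd : ∀ m, k - 1 ≤ m → ∀ i j, X ^ m ∣ (H - 1) i j := by
    intro m hm
    induction m, hm using Nat.le_induction with
    | base => exact hH
    | succ m hm ih =>
      have hC := hP₀ ▸ Matrix.map_coeff_mul_eq_smul_of_mul_eq_mul_map_phiCycl p hN ih
      have hm₀ : m ≠ 0 := by omega
      have hC₀ := Matrix.eq_zero_of_mul_eq_smul_mul_fin_two
        (fun h ↦ hp.not_isUnit ((isUnit_pow_iff hm₀).mp (by rw [h]; exact isUnit_one)))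
        (pow_ne_zero _ hp.ne_zero) (pow_mul_one_add_pow_sq_ne_pow_mul_sq hp ha hm hm₀) hC
      exact fun i j ↦ X_pow_succ_dvd_of_coeff_eq_zero (ih i j) (congrFun (congrFun hC₀ i) j)
  rw [← sub_eq_zero]
  ext i j n
  simpa using X_pow_dvd_iff.mp (hdvd (n + k) (by omega) i j) n (by omega)
end

section
/- Let F be an algebraically closed field, A ∈ M₂(F) an invertible matrix, B ∈ M₂(F) a nonzero matrix, and c ∈ F a scalar such that B·A = c·A·B. Then there exist roots α and β of the characteristic polynomial of A (eigenvalues of A) with α = c·β; in other words, c is a ratio of two eigenvalues of A. -/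
/-!
Endomorphisms with `f g = c g f` satisfy `(f - cμ)^k g = c^k g (f - μ)^k`, so `g` maps the
generalized eigenspace of `f` at `μ` into the one at `cμ`. Over an algebraically closed field
these generalized eigenspaces span the whole space, so `g ≠ 0` is nonzero on one of them, and both
`μ` and `cμ` are eigenvalues of `f`. Transposing `B A = c A B` puts it in this form with
`f = Aᵀ`.
-/

namespace Module.End

section CommRing

variable {R M : Type*} [CommRing R] [AddCommGroup M] [Module R M] {f g : End R M} {c : R}

theorem sub_smul_one_mul_of_mul_eq_smul_mul (h : f * g = c • (g * f)) (μ : R) :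
    (f - (c * μ) • 1) * g = c • (g * (f - μ • 1)) := by
  rw [sub_mul, h, mul_sub, smul_sub, mul_smul_comm, mul_one, smul_mul_assoc, one_mul, smul_smul]

theorem sub_smul_one_pow_mul_of_mul_eq_smul_mul (h : f * g = c • (g * f)) (μ : R) (k : ℕ) :
    (f - (c * μ) • 1) ^ k * g = c ^ k • (g * (f - μ • 1) ^ k) := by
  induction k with
  | zero => simp
  | succ k ih =>
    rw [pow_succ', mul_assoc, ih, mul_smul_comm, ← mul_assoc,
      sub_smul_one_mul_of_mul_eq_smul_mul h, smul_mul_assoc, smul_smul, ← pow_succ,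
      mul_assoc, ← pow_succ']

theorem mapsTo_maxGenEigenspace_of_mul_eq_smul_mul (h : f * g = c • (g * f)) (μ : R) :
    Set.MapsTo g (f.maxGenEigenspace μ) (f.maxGenEigenspace (c * μ)) := by
  rintro x hx
  obtain ⟨k, hk⟩ := (mem_maxGenEigenspace f μ x).mp hx
  refine (mem_maxGenEigenspace f (c * μ) (g x)).mpr ⟨k, ?_⟩
  rw [← Module.End.mul_apply, sub_smul_one_pow_mul_of_mul_eq_smul_mul h, LinearMap.smul_apply,
    Module.End.mul_apply, hk, map_zero, smul_zero]

theorem hasEigenvalue_of_mem_maxGenEigenspace {μ : R} {x : M} (hx : x ∈ f.maxGenEigenspace μ)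
    (hx₀ : x ≠ 0) : f.HasEigenvalue μ :=
  HasUnifEigenvector.hasUnifEigenvalue ⟨hx, hx₀⟩ |>.lt zero_lt_one

end CommRing

theorem exists_hasEigenvalue_and_hasEigenvalue_mul_of_mul_eq_smul_mul {K V : Type*} [Field K]
    [IsAlgClosed K] [AddCommGroup V] [Module K V] [FiniteDimensional K V] {f g : End K V} {c : K}
    (h : f * g = c • (g * f)) (hg : g ≠ 0) :
    ∃ μ, f.HasEigenvalue μ ∧ f.HasEigenvalue (c * μ) := by
  obtain ⟨μ, hμ⟩ : ∃ μ, ¬ f.maxGenEigenspace μ ≤ LinearMap.ker g := by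
    by_contra! hker
    apply hg
    rw [← LinearMap.ker_eq_top, eq_top_iff, ← f.iSup_maxGenEigenspace_eq_top]
    exact iSup_le hker
  obtain ⟨x, hx, hgx⟩ := SetLike.not_le_iff_exists.mp hμ
  have hx₀ : x ≠ 0 := by rintro rfl; simp at hgx
  have hgx_mem := mapsTo_maxGenEigenspace_of_mul_eq_smul_mul h μ hx
  exact ⟨μ, hasEigenvalue_of_mem_maxGenEigenspace hx hx₀,
    hasEigenvalue_of_mem_maxGenEigenspace hgx_mem hgx⟩

end Module.End

open Matrix Module.End in
theorem scalar_is_ratio_of_eigenvalues_general (F : Type*) [Field F] [IsAlgClosed F]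
    (A B : Matrix (Fin 2) (Fin 2) F) (hB : B ≠ 0) (c : F)
    (h : B * A = c • (A * B)) :
    ∃ α β : F, (Matrix.charpoly A).IsRoot α ∧ (Matrix.charpoly A).IsRoot β ∧
      α = c * β := by
  have hT : Aᵀ * Bᵀ = c • (Bᵀ * Aᵀ) := by
    rw [← transpose_mul, h, transpose_smul, transpose_mul]
  obtain ⟨μ, hμ, hcμ⟩ := exists_hasEigenvalue_and_hasEigenvalue_mul_of_mul_eq_smul_mul
    (by simpa only [toLin'_mul, Module.End.mul_eq_comp, map_smul] using congrArg toLin' hT)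
    (by simpa [transpose_eq_zero] using hB)
  rw [hasEigenvalue_iff_isRoot_charpoly, charpoly_toLin', charpoly_transpose] at hμ hcμ
  exact ⟨c * μ, μ, hcμ, hμ, rfl⟩

/-- If `A ∈ M₂(F)` is invertible, `B ∈ M₂(F)` is nonzero and `B·A = c·A·B`, then `c`
is a ratio of two eigenvalues of `A`: there are roots `α, β` of the characteristic
polynomial of `A` with `α = c·β`. -/
theorem scalar_is_ratio_of_eigenvalues (F : Type*) [Field F] [IsAlgClosed F]
    (A B : Matrix (Fin 2) (Fin 2) F) (hA : IsUnit A) (hB : B ≠ 0) (c : F)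
    (h : B * A = c • (A * B)) :
    ∃ α β : F, (Matrix.charpoly A).IsRoot α ∧ (Matrix.charpoly A).IsRoot β ∧
      α = c * β :=
  scalar_is_ratio_of_eigenvalues_general F A B hB c h
end

section
/- For every prime p and every integer n ≥ 1, the power series q_n/p ∈ ℚ_p[[X]] has constant coefficient 1 (hence is invertible in ℚ_p[[X]]), and for every integer i with 0 ≤ i < p^{n−1}(p−1), the coefficients of X^i in q_n/p and in its inverse (q_n/p)⁻¹ both lie in ℤ_p. In particular, for n ≥ 2 and p+2 ≤ k ≤ 2p−1, the parts of degree ≤ k−2 of (q_n/p)^{±1} have coefficients in ℤ_p. -/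
open PowerSeries

/-- In characteristic `p` the denominator `(1 + x)^(p^m) - 1` of this geometric sum is `x^(p^m)`. -/
theorem geom_sum_one_add_pow_char_pow_mul {S : Type*} [CommRing S] (p : ℕ) [Fact p.Prime]
    [CharP S p] (x : S) (m : ℕ) :
    (∑ j ∈ Finset.range p, ((1 + x) ^ p ^ m) ^ j) * x ^ p ^ m = x ^ (p ^ m * p) := by
  have hgeom := geom_sum_mul (1 + x ^ p ^ m) p
  rw [add_sub_cancel_left, add_pow_char, one_pow, add_sub_cancel_left, ← pow_mul] at hgeom
  rwa [add_pow_char_pow, one_pow]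

noncomputable def qSeriesInt (p n : ℕ) : ℤ⟦X⟧ :=
  ∑ j ∈ Finset.range p, ((1 + X) ^ (p ^ (n - 1))) ^ j

theorem map_qSeriesInt (p : ℕ) [Fact p.Prime] (n : ℕ) :
    map (Int.castRingHom ℚ_[p]) (qSeriesInt p n) = qSeries p n := by
  simp [qSeries, qSeriesInt, map_sum]

theorem map_qSeriesInt_zmod (p : ℕ) [Fact p.Prime] (n : ℕ) :
    map (Int.castRingHom (ZMod p)) (qSeriesInt p n) = X ^ (p ^ (n - 1) * (p - 1)) := by
  have : CharP (ZMod p)⟦X⟧ p := charP_of_injective_ringHom (C_injective (R := ZMod p)) p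
  apply mul_X_pow_cancel (k := p ^ (n - 1))
  simp only [qSeriesInt, map_sum, map_pow, map_add, map_one, map_X]
  rw [geom_sum_one_add_pow_char_pow_mul, ← pow_add, ← Nat.mul_add_one,
    Nat.sub_add_cancel (Fact.out : p.Prime).one_le]

theorem prime_dvd_coeff_qSeriesInt (p : ℕ) [Fact p.Prime] (n : ℕ) {i : ℕ}
    (hi : i < p ^ (n - 1) * (p - 1)) : (p : ℤ) ∣ coeff i (qSeriesInt p n) := by
  have h := congrArg (coeff i) (map_qSeriesInt_zmod p n)
  rw [coeff_map, coeff_X_pow, if_neg hi.ne] at h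
  exact (ZMod.intCast_zmod_eq_zero_iff_dvd _ p).mp h

theorem constantCoeff_qSeries (p : ℕ) [Fact p.Prime] (n : ℕ) :
    constantCoeff (qSeries p n) = p := by
  simp [qSeries, map_sum]

theorem norm_coeff_inv_smul_qSeries_le_one (p : ℕ) [Fact p.Prime] (n : ℕ) {i : ℕ}
    (hi : i < p ^ (n - 1) * (p - 1)) :
    ‖coeff i ((p : ℚ_[p])⁻¹ • qSeries p n)‖ ≤ 1 := by
  obtain ⟨d, hd⟩ := prime_dvd_coeff_qSeriesInt p n hi
  have hp : (p : ℚ_[p]) ≠ 0 := Nat.cast_ne_zero.mpr (Fact.out : p.Prime).ne_zero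
  rw [coeff_smul, ← map_qSeriesInt, coeff_map, hd, smul_eq_mul, eq_intCast, Int.cast_mul,
    Int.cast_natCast, inv_mul_cancel_left₀ hp]
  exact Padic.norm_int_le_one d

theorem PowerSeries.norm_coeff_inv_le_one {K : Type*} [NormedField K] [IsUltrametricDist K]
    {φ : K⟦X⟧} {N : ℕ} (h₀ : ‖constantCoeff φ‖ = 1)
    (h : ∀ i < N, ‖coeff i φ‖ ≤ 1) :
    ∀ i < N, ‖coeff i φ⁻¹‖ ≤ 1 := by
  intro i
  induction i using Nat.strong_induction_on with
  | _ i ih =>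
    intro hi
    have hinv : ‖(constantCoeff φ)⁻¹‖ = 1 := by rw [norm_inv, h₀, inv_one]
    rw [coeff_inv]
    split_ifs with hi0
    · exact hinv.le
    rw [norm_mul, norm_neg, hinv, one_mul]
    refine IsUltrametricDist.norm_sum_le_of_forall_le_of_nonneg zero_le_one fun x hx => ?_
    have hsum : x.1 + x.2 = i := Finset.HasAntidiagonal.mem_antidiagonal.mp hx
    split_ifs with hlt
    · rw [norm_mul]
      exact mul_le_one₀ (h x.1 (by omega)) (norm_nonneg _) (ih x.2 hlt (hlt.trans hi))
    · simp

theorem q_over_p_coeffs_integral_general (p : ℕ) [Fact p.Prime] (n : ℕ) :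
    PowerSeries.constantCoeff ((p : ℚ_[p])⁻¹ • qSeries p n) = 1 ∧
    (∀ i < p ^ (n - 1) * (p - 1),
      ‖PowerSeries.coeff i ((p : ℚ_[p])⁻¹ • qSeries p n)‖ ≤ 1 ∧
      ‖PowerSeries.coeff i (((p : ℚ_[p])⁻¹ • qSeries p n)⁻¹)‖ ≤ 1) ∧
    (2 ≤ n → ∀ k, p + 2 ≤ k → k ≤ 2 * p - 1 → ∀ i ≤ k - 2,
      ‖PowerSeries.coeff i ((p : ℚ_[p])⁻¹ • qSeries p n)‖ ≤ 1 ∧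
      ‖PowerSeries.coeff i (((p : ℚ_[p])⁻¹ • qSeries p n)⁻¹)‖ ≤ 1) := by
  have hp := (Fact.out : p.Prime)
  have hconst : constantCoeff ((p : ℚ_[p])⁻¹ • qSeries p n) = 1 := by
    rw [← coeff_zero_eq_constantCoeff_apply, coeff_smul, coeff_zero_eq_constantCoeff_apply,
      constantCoeff_qSeries, smul_eq_mul, inv_mul_cancel₀ (by exact_mod_cast hp.ne_zero)]
  have hcoeffs : ∀ i < p ^ (n - 1) * (p - 1),
      ‖coeff i ((p : ℚ_[p])⁻¹ • qSeries p n)‖ ≤ 1 ∧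
      ‖coeff i (((p : ℚ_[p])⁻¹ • qSeries p n)⁻¹)‖ ≤ 1 := fun i hi =>
    ⟨norm_coeff_inv_smul_qSeries_le_one p n hi,
      norm_coeff_inv_le_one (by rw [hconst, norm_one])
        (fun _ => norm_coeff_inv_smul_qSeries_le_one p n) i hi⟩
  refine ⟨hconst, hcoeffs, fun hn k _ hk i hi => hcoeffs i ?_⟩
  have hp2 := hp.two_le
  calc i ≤ 2 * p - 3 := by omega
    _ < p * (p - 1) := by zify [hp2, (by omega : 3 ≤ 2 * p), (by omega : 1 ≤ p)]; nlinarith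
    _ ≤ p ^ (n - 1) * (p - 1) :=
      Nat.mul_le_mul_right _ (Nat.le_self_pow (by omega) p)

/-- `q_n/p` has constant coefficient `1`, and for `0 ≤ i < p^(n-1)(p-1)` the
coefficients of `X^i` in `q_n/p` and `(q_n/p)⁻¹` lie in `ℤ_p`. In particular, for
`n ≥ 2` and `p + 2 ≤ k ≤ 2p - 1`, the parts of degree `≤ k - 2` of `(q_n/p)^{±1}`
have coefficients in `ℤ_p`. -/
theorem q_over_p_coeffs_integral (p : ℕ) [Fact p.Prime] (n : ℕ) (hn : 1 ≤ n) :
    PowerSeries.constantCoeff ((p : ℚ_[p])⁻¹ • qSeries p n) = 1 ∧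
    (∀ i < p ^ (n - 1) * (p - 1),
      ‖PowerSeries.coeff i ((p : ℚ_[p])⁻¹ • qSeries p n)‖ ≤ 1 ∧
      ‖PowerSeries.coeff i (((p : ℚ_[p])⁻¹ • qSeries p n)⁻¹)‖ ≤ 1) ∧
    (2 ≤ n → ∀ k, p + 2 ≤ k → k ≤ 2 * p - 1 → ∀ i ≤ k - 2,
      ‖PowerSeries.coeff i ((p : ℚ_[p])⁻¹ • qSeries p n)‖ ≤ 1 ∧
      ‖PowerSeries.coeff i (((p : ℚ_[p])⁻¹ • qSeries p n)⁻¹)‖ ≤ 1) :=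
  q_over_p_coeffs_integral_general p n
end

section
/- Let p be a prime and k an integer with p+2 ≤ k ≤ 2p−1. Write (q/p)^{k−1} = Σ_{i≥0} g_i X^i in ℚ_p[[X]], where q = ((1+X)^p − 1)/X. Then: (i) g_i ∈ ℤ_p for 0 ≤ i ≤ p−2; (ii) g_{p−1} − (k−1)/p ∈ ℤ_p; and (iii) p·g_i ∈ ℤ_p for p ≤ i ≤ k−2. -/
/-!
Since `X * q = (1 + X)^p - 1`, the coefficients of `q` are `C(p, j+1)`, all divisible by `p` except
the leading one. Hence `q / p = u + X^(p-1) / p` with `u ∈ ℤ_p⟦X⟧` and `u(0) = 1`. Modulo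
`(X^(p-1)/p)^2`, which only affects coefficients of index `≥ 2(p-1) > k - 2`, the binomial expansion
gives `(q/p)^(k-1) ≡ u^(k-1) + (k-1) X^(p-1) u^(k-2) / p`, and the three claims are read off.
-/

open PowerSeries

/-- `q = q_1 = ((1+X)^p - 1)/X = Σ_{j=0}^{p-1} (1+X)^j`, viewed in `ℚ_p[[X]]`. -/
noncomputable def qOne (p : ℕ) [Fact p.Prime] : PowerSeries ℚ_[p] :=
  ∑ j ∈ Finset.range p, (1 + PowerSeries.X) ^ j

namespace PowerSeries

variable {R : Type*} [CommRing R]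

theorem mem_range_map_subtype_iff {S : Subring R} {f : R⟦X⟧} :
    f ∈ (map S.subtype).range ↔ ∀ n, coeff n f ∈ S := by
  constructor
  · rintro ⟨g, rfl⟩ n
    simp [coeff_map]
  · intro h
    exact ⟨mk fun n => ⟨coeff n f, h n⟩, by ext n; simp [coeff_map]⟩

theorem coeff_add_X_pow_mul_pow (f g : R⟦X⟧) (n : ℕ) {d i : ℕ} (hi : i < 2 * d) :
    coeff i ((f + X ^ d * g) ^ n) =
      coeff i (f ^ n) + if d ≤ i then n * coeff (i - d) (g * f ^ (n - 1)) else 0 := by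
  have hdvd :
      X ^ (2 * d) ∣ (f + X ^ d * g) ^ n - f ^ (n - 1) * (X ^ d * g) * (n : R⟦X⟧) - f ^ n :=
    (Dvd.intro (g ^ 2) (by ring)).trans (sq_dvd_add_pow_sub_sub _ f n)
  have hlin :
      f ^ (n - 1) * (X ^ d * g) * (n : R⟦X⟧) = X ^ d * (C (n : R) * (g * f ^ (n - 1))) := by
    rw [map_natCast]; ring
  have h := X_pow_dvd_iff.mp hdvd i hi
  rw [map_sub, map_sub, sub_sub, sub_eq_zero, hlin, coeff_X_pow_mul', coeff_C_mul] at h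
  rw [h, add_comm]

end PowerSeries

variable {p : ℕ} [Fact p.Prime]

theorem qOne_mul_X : qOne p * X = (1 + X) ^ p - 1 := by
  rw [qOne, add_comm 1 X, eq_sub_iff_add_eq]
  exact geom_sum_mul_add X p

theorem coeff_qOne (n : ℕ) : coeff n (qOne p) = p.choose (n + 1) := by
  rw [← coeff_succ_mul_X, qOne_mul_X, map_sub, coeff_one, if_neg n.succ_ne_zero, sub_zero,
    ← Polynomial.coe_X, ← Polynomial.coe_one, ← Polynomial.coe_add, ← Polynomial.coe_pow,
    Polynomial.coeff_coe, Polynomial.coeff_one_add_X_pow]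

variable (p) in
noncomputable def qOneIntegralPart : ℚ_[p]⟦X⟧ := (p : ℚ_[p])⁻¹ • (qOne p - X ^ (p - 1))

theorem inv_smul_qOne :
    (p : ℚ_[p])⁻¹ • qOne p = qOneIntegralPart p + X ^ (p - 1) * C (p : ℚ_[p])⁻¹ := by
  rw [qOneIntegralPart, smul_eq_C_mul, smul_eq_C_mul]
  ring

theorem coeff_qOneIntegralPart (n : ℕ) :
    coeff n (qOneIntegralPart p) =
      (p : ℚ_[p])⁻¹ * (p.choose (n + 1) - if n = p - 1 then 1 else 0) := by
  rw [qOneIntegralPart, coeff_smul, map_sub, coeff_qOne, coeff_X_pow, smul_eq_mul]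

theorem coeff_qOneIntegralPart_mem (n : ℕ) :
    coeff n (qOneIntegralPart p) ∈ PadicInt.subring p := by
  have hp := (Fact.out : p.Prime)
  have hp2 := hp.two_le
  rw [coeff_qOneIntegralPart]
  rcases lt_trichotomy (n + 1) p with h | h | h
  · obtain ⟨t, ht⟩ := hp.dvd_choose_self n.succ_ne_zero h
    rw [if_neg (by omega), ht, sub_zero, Nat.cast_mul,
      inv_mul_cancel_left₀ (by exact_mod_cast hp.ne_zero)]
    exact natCast_mem _ t
  · rw [if_pos (by omega : n = p - 1), h, Nat.choose_self, Nat.cast_one, sub_self, mul_zero]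
    exact zero_mem _
  · rw [if_neg (by omega : n ≠ p - 1), Nat.choose_eq_zero_of_lt h, Nat.cast_zero, sub_zero,
      mul_zero]
    exact zero_mem _

theorem constantCoeff_qOneIntegralPart : constantCoeff (qOneIntegralPart p) = 1 := by
  have hp := (Fact.out : p.Prime)
  have hp2 := hp.two_le
  rw [← coeff_zero_eq_constantCoeff_apply, coeff_qOneIntegralPart, if_neg (by omega : 0 ≠ p - 1),
    Nat.choose_one_right, sub_zero, inv_mul_cancel₀ (by exact_mod_cast hp.ne_zero)]

theorem coeff_pow_qOneIntegralPart_mem (n i : ℕ) :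
    coeff i (qOneIntegralPart p ^ n) ∈ PadicInt.subring p :=
  mem_range_map_subtype_iff.mp
    (pow_mem (mem_range_map_subtype_iff.mpr coeff_qOneIntegralPart_mem) n) i

/-- Writing `(q/p)^(k-1) = Σ g_i X^i` with `p + 2 ≤ k ≤ 2p - 1`:
(i) `g_i ∈ ℤ_p` for `0 ≤ i ≤ p - 2`; (ii) `g_{p-1} - (k-1)/p ∈ ℤ_p`;
(iii) `p · g_i ∈ ℤ_p` for `p ≤ i ≤ k - 2`. -/
theorem coeffs_of_q_over_p_pow (p : ℕ) [Fact p.Prime] (k : ℕ)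
    (hk₁ : p + 2 ≤ k) (hk₂ : k ≤ 2 * p - 1) :
    (∀ i ≤ p - 2,
      ‖PowerSeries.coeff (R := ℚ_[p]) i (((p : ℚ_[p])⁻¹ • qOne p) ^ (k - 1))‖ ≤ 1) ∧
    ‖PowerSeries.coeff (R := ℚ_[p]) (p - 1) (((p : ℚ_[p])⁻¹ • qOne p) ^ (k - 1)) -
        ((k : ℚ_[p]) - 1) / (p : ℚ_[p])‖ ≤ 1 ∧
    (∀ i, p ≤ i → i ≤ k - 2 →
      ‖(p : ℚ_[p]) * PowerSeries.coeff (R := ℚ_[p]) i (((p : ℚ_[p])⁻¹ • qOne p) ^ (k - 1))‖ ≤ 1) := by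
  have hp : (p : ℚ_[p]) ≠ 0 := Nat.cast_ne_zero.mpr (Fact.out : p.Prime).ne_zero
  have hk : ((k - 1 : ℕ) : ℚ_[p]) = k - 1 := Nat.cast_pred (by omega)
  have hcoeff : ∀ i ≤ k - 2, coeff i (((p : ℚ_[p])⁻¹ • qOne p) ^ (k - 1)) =
      coeff i (qOneIntegralPart p ^ (k - 1)) + if p - 1 ≤ i then
        (k - 1) * ((p : ℚ_[p])⁻¹ * coeff (i - (p - 1)) (qOneIntegralPart p ^ (k - 2))) else 0 := by
    intro i hi
    rw [inv_smul_qOne, coeff_add_X_pow_mul_pow _ _ _ (by omega), coeff_C_mul, hk, Nat.sub_sub]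
  simp only [← PadicInt.mem_subring_iff]
  refine ⟨fun i hi => ?_, ?_, fun i hpi hik => ?_⟩
  · rw [hcoeff i (by omega), if_neg (by omega), add_zero]
    exact coeff_pow_qOneIntegralPart_mem _ _
  · rw [hcoeff _ (by omega), if_pos le_rfl, Nat.sub_self, coeff_zero_eq_constantCoeff_apply,
      map_pow constantCoeff, constantCoeff_qOneIntegralPart, one_pow, mul_one, div_eq_mul_inv,
      add_sub_cancel_right]
    exact coeff_pow_qOneIntegralPart_mem _ _
  · rw [hcoeff i (by omega), if_pos (by omega), mul_add, mul_left_comm, mul_inv_cancel_left₀ hp]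
    exact add_mem (mul_mem (natCast_mem _ p) (coeff_pow_qOneIntegralPart_mem _ _))
      (mul_mem (by rw [← hk]; exact natCast_mem _ _) (coeff_pow_qOneIntegralPart_mem _ _))
end
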